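/- Let H be a commutative Hopf algebra, C a cocommutative coalgebra with a coflat H-coaction δ. For counitary convolution-invertible f, g : C → H^{⊗(q−1)}, the schism differential D satisfies D(f ⋆ g) = D(f) ⋆ D(g). In particular, the part involving the coaction satisfies ((f ⋆ g) ⊗ id) ∘ δ = ((f ⊗ id) ∘ δ) ⋆ ((g ⊗ id) ∘ δ). -/

import Mathlib

open TensorProduct LinearMap Coalgebra

/-- A coflat Hopf coaction of a Hopf algebra `H` on a coalgebra `C`. -/
structure IsCoflatCoaction (R C H : Type) [CommRing R]
    [AddCommGroup C] [Module R C] [Coalgebra R C]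
    [Ring H] [HopfAlgebra R H]
    (δ : C →ₗ[R] C ⊗[R] H) : Prop where
  coassoc : (TensorProduct.assoc R C H H).toLinearMap ∘ₗ
      (TensorProduct.map δ (LinearMap.id : H →ₗ[R] H)) ∘ₗ δ
      = (TensorProduct.map (LinearMap.id : C →ₗ[R] C) (Coalgebra.comul (R := R))) ∘ₗ δ
  counitary : (TensorProduct.rid R C).toLinearMap ∘ₗ
      (TensorProduct.map (LinearMap.id : C →ₗ[R] C) (Coalgebra.counit (R := R))) ∘ₗ δ
      = LinearMap.id
  coflat_mul : (TensorProduct.map (LinearMap.id : (C ⊗[R] C) →ₗ[R] C ⊗[R] C)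
        (LinearMap.mul' R H)) ∘ₗ
      (TensorProduct.tensorTensorTensorComm R C H C H).toLinearMap ∘ₗ
      (TensorProduct.map δ δ) ∘ₗ Coalgebra.comul
      = (TensorProduct.map (Coalgebra.comul (R := R)) (LinearMap.id : H →ₗ[R] H)) ∘ₗ δ
  coflat_counit : (LinearMap.mul' R R) ∘ₗ
      (TensorProduct.map (Coalgebra.counit (R := R)) (Coalgebra.counit (R := R))) ∘ₗ δ
      = Coalgebra.counit

section Conv

variable (R C A : Type) [CommRing R] [AddCommGroup C] [Module R C] [Coalgebra R C]
  [Ring A] [Algebra R A]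

/-- The convolution product on `Hom(C,A)`: `(f ⋆ g)(c) = f(c₍₁₎) g(c₍₂₎)`. -/
noncomputable def conv (f g : C →ₗ[R] A) : C →ₗ[R] A :=
  (LinearMap.mul' R A) ∘ₗ (TensorProduct.map f g) ∘ₗ Coalgebra.comul

/-- The convolution unit `c ↦ ε(c) 1`. -/
noncomputable def convOne : C →ₗ[R] A :=
  (Algebra.linearMap R A) ∘ₗ Coalgebra.counit

/-- Convolution product of a list of maps. -/
noncomputable def convList (l : List (C →ₗ[R] A)) : C →ₗ[R] A :=
  l.foldr (conv R C A) (convOne R C A)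

end Conv

section Tpow

variable (R H : Type) [CommRing R] [CommRing H] [HopfAlgebra R H]

/-- Tensor powers `H^{⊗ q}` of `H` (with `H^{⊗0} = R`), bundled with their
commutative-ring and `R`-algebra structures. -/
noncomputable def TpowAux : ℕ → Σ (A : Type), Σ (_ : CommRing A), Algebra R A
  | 0 => ⟨R, inferInstance, inferInstance⟩
  | 1 => ⟨H, inferInstance, inferInstance⟩
  | n+2 =>
    let p := TpowAux (n+1)
    letI := p.2.1
    letI := p.2.2
    ⟨TensorProduct R p.1 H, inferInstance, inferInstance⟩

/-- The tensor power `H^{⊗ q}`. -/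
noncomputable abbrev Tpow (q : ℕ) : Type := (TpowAux R H q).1

noncomputable instance (q : ℕ) : CommRing (Tpow R H q) := (TpowAux R H q).2.1
noncomputable instance (q : ℕ) : Algebra R (Tpow R H q) := (TpowAux R H q).2.2

/-- `Δ_H^i : H^{⊗q} → H^{⊗(q+1)}`, applying `Δ_H` in the `i`-th tensor slot
(`1 ≤ i ≤ q`; junk value for `q = 0`). -/
noncomputable def deltaSlot : (q : ℕ) → ℕ → (Tpow R H q →ₗ[R] Tpow R H (q+1))
  | 0, _ => 0
  | 1, _ => (Coalgebra.comul (R := R) (A := H) :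
      Tpow R H 1 →ₗ[R] Tpow R H 2)
  | q+2, i =>
    if i = q + 2 then
      ((TensorProduct.assoc R (Tpow R H (q+1)) H H).symm.toLinearMap ∘ₗ
        TensorProduct.map (LinearMap.id : Tpow R H (q+1) →ₗ[R] Tpow R H (q+1))
          (Coalgebra.comul (R := R) (A := H)) :
        Tpow R H (q+2) →ₗ[R] Tpow R H (q+3))
    else
      (TensorProduct.map (deltaSlot (q+1) i) (LinearMap.id : H →ₗ[R] H) :
        Tpow R H (q+2) →ₗ[R] Tpow R H (q+3))

/-- `f ↦ f ⊗ 1 : H^{⊗q} → H^{⊗(q+1)}`. -/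
noncomputable def tensorOne : (q : ℕ) → Tpow R H q →ₗ[R] Tpow R H (q+1)
  | 0 => (Algebra.linearMap R H : Tpow R H 0 →ₗ[R] Tpow R H 1)
  | q+1 => ((TensorProduct.mk R (Tpow R H (q+1)) H).flip 1 :
      Tpow R H (q+1) →ₗ[R] Tpow R H (q+2))

/-- The counit `ε^{⊗q} : H^{⊗q} → R`. -/
noncomputable def counitPow : (q : ℕ) → Tpow R H q →ₗ[R] R
  | 0 => LinearMap.id
  | 1 => (Coalgebra.counit (R := R) (A := H) : Tpow R H 1 →ₗ[R] R)
  | q+2 => (LinearMap.mul' R R) ∘ₗ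
      TensorProduct.map (counitPow (q+1)) (Coalgebra.counit (R := R) (A := H))

end Tpow

section Schism

variable (R C H : Type) [CommRing R] [AddCommGroup C] [Module R C] [Coalgebra R C]
  [CommRing H] [HopfAlgebra R H] (δ : C →ₗ[R] C ⊗[R] H)

/-- The leading term `(f ⊗ id) ∘ δ : C → H^{⊗(q+1)}` of the schism differential. -/
noncomputable def schismFirst : (q : ℕ) → (C →ₗ[R] Tpow R H q) → (C →ₗ[R] Tpow R H (q+1))
  | 0, f => (TensorProduct.lid R H).toLinearMap ∘ₗ
      TensorProduct.map f (LinearMap.id : H →ₗ[R] H) ∘ₗ δ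
  | q+1, f => TensorProduct.map f (LinearMap.id : H →ₗ[R] H) ∘ₗ δ

/-- The schism differential
`D(f) = ((f ⊗ id)∘δ) ⋆ (Δ_H^1 ∘ f)^{⋆-1} ⋆ (Δ_H^2 ∘ f) ⋆ ⋯ ⋆ (f ⊗ 1)^{⋆∓1}`,
where `f' ` is the convolution inverse of `f` (so `(T ∘ f)^{⋆-1} = T ∘ f'` for the
algebra-morphism-induced terms `T`). -/
noncomputable def Dschism (q : ℕ) (f f' : C →ₗ[R] Tpow R H q) : C →ₗ[R] Tpow R H (q+1) :=
  convList R C (Tpow R H (q+1))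
    (schismFirst R C H δ q f ::
      ((List.range q).map fun j =>
        deltaSlot R H q (j+1) ∘ₗ (if (j+1) % 2 = 0 then f else f')) ++
      [tensorOne R H q ∘ₗ (if (q+1) % 2 = 0 then f else f')])

end Schism

/-!
Each factor of `D(f)` comes from `f` or its convolution inverse through a map that preserves
convolution products: post-composition with an algebra morphism (`Δ_H^i`, `- ⊗ 1`), or, for the
leading factor, `f ↦ (f ⊗ id) ∘ δ`, which is multiplicative exactly because `δ` is coflat.
As `C` is cocommutative, the convolution ring of maps `C → H^{⊗(q+1)}` is commutative, so the
product of the factors is multiplicative as well.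
-/

open WithConv

section Convolution

variable {R C A : Type} [CommRing R] [AddCommGroup C] [Module R C] [Coalgebra R C]
  [Ring A] [Algebra R A]

lemma toConv_conv (f g : C →ₗ[R] A) : toConv (conv R C A f g) = toConv f * toConv g := rfl

lemma toConv_convList (l : List (C →ₗ[R] A)) :
    toConv (convList R C A l) = (l.map toConv).prod := by
  induction l with
  | nil => rfl
  | cons f l ih => rw [List.map_cons, List.prod_cons, ← ih]; rfl

lemma AlgHom.comp_conv {B : Type} [Ring B] [Algebra R B] (T : A →ₐ[R] B) (f g : C →ₗ[R] A) :
    T.toLinearMap ∘ₗ conv R C A f g = conv R C B (T.toLinearMap ∘ₗ f) (T.toLinearMap ∘ₗ g) :=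
  LinearMap.algHom_comp_convMul_distrib T (toConv f) (toConv g)

end Convolution

section Multiplicativity

variable {R C H : Type} [CommRing R] [AddCommGroup C] [Module R C] [Coalgebra R C]

lemma IsCoflatCoaction.map_conv_id_comp [Ring H] [HopfAlgebra R H] {δ : C →ₗ[R] C ⊗[R] H}
    (hδ : IsCoflatCoaction R C H δ) {A : Type} [Ring A] [Algebra R A] (f g : C →ₗ[R] A) :
    TensorProduct.map (conv R C A f g) (LinearMap.id : H →ₗ[R] H) ∘ₗ δ
      = conv R C (A ⊗[R] H) (TensorProduct.map f LinearMap.id ∘ₗ δ)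
          (TensorProduct.map g LinearMap.id ∘ₗ δ) := by
  have mul_map_map : LinearMap.mul' R (A ⊗[R] H) ∘ₗ
        TensorProduct.map (TensorProduct.map f (LinearMap.id : H →ₗ[R] H))
          (TensorProduct.map g LinearMap.id)
      = TensorProduct.map (LinearMap.mul' R A ∘ₗ TensorProduct.map f g) LinearMap.id ∘ₗ
        TensorProduct.map LinearMap.id (LinearMap.mul' R H) ∘ₗ
        (TensorProduct.tensorTensorTensorComm R C H C H).toLinearMap := by
    ext x h y k
    simp [Algebra.TensorProduct.tmul_mul_tmul]
  calc TensorProduct.map (conv R C A f g) LinearMap.id ∘ₗ δ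
      = TensorProduct.map (LinearMap.mul' R A ∘ₗ TensorProduct.map f g) LinearMap.id ∘ₗ
          TensorProduct.map Coalgebra.comul LinearMap.id ∘ₗ δ := by
        rw [← LinearMap.comp_assoc, ← TensorProduct.map_comp, LinearMap.comp_id]; rfl
    _ = _ := by
        rw [← hδ.coflat_mul, conv, TensorProduct.map_comp]
        simp only [← LinearMap.comp_assoc, mul_map_map]

variable [CommRing H] [HopfAlgebra R H]

lemma schismFirst_conv {δ : C →ₗ[R] C ⊗[R] H} (hδ : IsCoflatCoaction R C H δ) :
    ∀ (q : ℕ) (f g : C →ₗ[R] Tpow R H q),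
    schismFirst R C H δ q (conv R C (Tpow R H q) f g)
      = conv R C (Tpow R H (q+1)) (schismFirst R C H δ q f) (schismFirst R C H δ q g)
  | 0, f, g =>
    (congrArg ((Algebra.TensorProduct.lid R H).toLinearMap ∘ₗ ·) (hδ.map_conv_id_comp f g)).trans
      ((Algebra.TensorProduct.lid R H).toAlgHom.comp_conv _ _)
  | _+1, f, g => hδ.map_conv_id_comp f g

-- Indexed from `q + 1`: on `H^{⊗0} = R` the map `deltaSlot` is the zero map, which is not unital.
variable (R H) in
noncomputable def deltaSlotAlgHom : (q : ℕ) → ℕ → Tpow R H (q+1) →ₐ[R] Tpow R H (q+2)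
  | 0, _ => (Bialgebra.comulAlgHom R H : Tpow R H 1 →ₐ[R] Tpow R H 2)
  | q+1, i =>
    if i = q + 2 then
      (((Algebra.TensorProduct.assoc R R R (Tpow R H (q+1)) H H).symm.toAlgHom.comp
        (Algebra.TensorProduct.map (AlgHom.id R (Tpow R H (q+1))) (Bialgebra.comulAlgHom R H))) :
        Tpow R H (q+2) →ₐ[R] Tpow R H (q+3))
    else
      (Algebra.TensorProduct.map (deltaSlotAlgHom q i) (AlgHom.id R H) :
        Tpow R H (q+2) →ₐ[R] Tpow R H (q+3))

lemma deltaSlotAlgHom_toLinearMap :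
    ∀ q i, (deltaSlotAlgHom R H q i).toLinearMap = deltaSlot R H (q+1) i
  | 0, _ => rfl
  | q+1, i => by
    rw [deltaSlotAlgHom, deltaSlot]
    by_cases hi : i = q + 2
    · simp only [hi, ↓reduceIte]; rfl
    · simp only [hi, ↓reduceIte, ← deltaSlotAlgHom_toLinearMap q i]; rfl

lemma deltaSlot_comp_conv (q i : ℕ) (f g : C →ₗ[R] Tpow R H q) :
    deltaSlot R H q i ∘ₗ conv R C (Tpow R H q) f g
      = conv R C (Tpow R H (q+1)) (deltaSlot R H q i ∘ₗ f) (deltaSlot R H q i ∘ₗ g) := by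
  cases q with
  | zero =>
    simp only [deltaSlot, LinearMap.zero_comp]
    exact (congrArg ofConv (mul_zero (0 : WithConv (C →ₗ[R] Tpow R H 1)))).symm
  | succ q => simpa only [deltaSlotAlgHom_toLinearMap] using (deltaSlotAlgHom R H q i).comp_conv f g

variable (R H) in
noncomputable def tensorOneAlgHom : (q : ℕ) → Tpow R H q →ₐ[R] Tpow R H (q+1)
  | 0 => (Algebra.ofId R H : Tpow R H 0 →ₐ[R] Tpow R H 1)
  | q+1 => (Algebra.TensorProduct.includeLeft : Tpow R H (q+1) →ₐ[R] Tpow R H (q+2))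

lemma tensorOneAlgHom_toLinearMap (q : ℕ) :
    (tensorOneAlgHom R H q).toLinearMap = tensorOne R H q := by
  cases q <;> rfl

lemma tensorOne_comp_conv (q : ℕ) (f g : C →ₗ[R] Tpow R H q) :
    tensorOne R H q ∘ₗ conv R C (Tpow R H q) f g
      = conv R C (Tpow R H (q+1)) (tensorOne R H q ∘ₗ f) (tensorOne R H q ∘ₗ g) := by
  simpa only [tensorOneAlgHom_toLinearMap] using (tensorOneAlgHom R H q).comp_conv f g

variable (R H) in
lemma toConv_Dschism (δ : C →ₗ[R] C ⊗[R] H) (q : ℕ) (f f' : C →ₗ[R] Tpow R H q) :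
    toConv (Dschism R C H δ q f f') = toConv (schismFirst R C H δ q f) *
      ((List.range q).map fun j =>
        toConv (deltaSlot R H q (j+1) ∘ₗ if (j+1) % 2 = 0 then f else f')).prod *
      toConv (tensorOne R H q ∘ₗ if (q+1) % 2 = 0 then f else f') := by
  rw [Dschism, toConv_convList]
  simp only [List.map_cons, List.map_append, List.map_map, List.prod_cons, List.prod_append,
    List.map_nil, List.prod_nil, mul_one, mul_assoc]
  rfl

end Multiplicativity

theorem Dschism_conv_general (R C H : Type) [CommRing R]
    [AddCommGroup C] [Module R C] [Coalgebra R C] [CommRing H] [HopfAlgebra R H]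
    (hC : (TensorProduct.comm R C C).toLinearMap ∘ₗ (Coalgebra.comul (R := R))
      = Coalgebra.comul)
    (δ : C →ₗ[R] C ⊗[R] H) (hδ : IsCoflatCoaction R C H δ)
    (q : ℕ) (f f' g g' : C →ₗ[R] Tpow R H q) :
    Dschism R C H δ q (conv R C (Tpow R H q) f g) (conv R C (Tpow R H q) f' g')
      = conv R C (Tpow R H (q+1)) (Dschism R C H δ q f f') (Dschism R C H δ q g g') ∧
    schismFirst R C H δ q (conv R C (Tpow R H q) f g)
      = conv R C (Tpow R H (q+1)) (schismFirst R C H δ q f) (schismFirst R C H δ q g) := by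
  refine ⟨toConv_injective ?_, schismFirst_conv hδ q f g⟩
  have : IsCocomm R C := ⟨hC⟩
  have ite_conv (p : Prop) [Decidable p] :
      (if p then conv R C (Tpow R H q) f g else conv R C (Tpow R H q) f' g')
        = conv R C (Tpow R H q) (if p then f else f') (if p then g else g') := by
    split_ifs <;> rfl
  simp only [toConv_conv, toConv_Dschism, ite_conv, schismFirst_conv hδ, deltaSlot_comp_conv,
    tensorOne_comp_conv, List.prod_map_mul]
  ring

/-- for a commutative Hopf algebra `H`, a cocommutative coalgebra `C` with
coflat `H`-coaction `δ`, and counitary convolution-invertible `f, g : C → H^{⊗q}`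
(with convolution inverses `f', g'`), the schism differential is multiplicative,
`D(f ⋆ g) = D(f) ⋆ D(g)`; in particular `((f ⋆ g) ⊗ id) ∘ δ = ((f ⊗ id)∘δ) ⋆ ((g ⊗ id)∘δ)`. -/
theorem Dschism_conv (R C H : Type) [CommRing R]
    [AddCommGroup C] [Module R C] [Coalgebra R C] [CommRing H] [HopfAlgebra R H]
    (hC : (TensorProduct.comm R C C).toLinearMap ∘ₗ (Coalgebra.comul (R := R))
      = Coalgebra.comul)
    (δ : C →ₗ[R] C ⊗[R] H) (hδ : IsCoflatCoaction R C H δ)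
    (q : ℕ) (f f' g g' : C →ₗ[R] Tpow R H q)
    (hf : conv R C (Tpow R H q) f f' = convOne R C (Tpow R H q))
    (hf' : conv R C (Tpow R H q) f' f = convOne R C (Tpow R H q))
    (hg : conv R C (Tpow R H q) g g' = convOne R C (Tpow R H q))
    (hg' : conv R C (Tpow R H q) g' g = convOne R C (Tpow R H q))
    (hfc : counitPow R H q ∘ₗ f = Coalgebra.counit)
    (hf'c : counitPow R H q ∘ₗ f' = Coalgebra.counit)
    (hgc : counitPow R H q ∘ₗ g = Coalgebra.counit)
    (hg'c : counitPow R H q ∘ₗ g' = Coalgebra.counit) :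
    Dschism R C H δ q (conv R C (Tpow R H q) f g) (conv R C (Tpow R H q) f' g')
      = conv R C (Tpow R H (q+1)) (Dschism R C H δ q f f') (Dschism R C H δ q g g') ∧
    schismFirst R C H δ q (conv R C (Tpow R H q) f g)
      = conv R C (Tpow R H (q+1)) (schismFirst R C H δ q f) (schismFirst R C H δ q g) :=
  Dschism_conv_general R C H hC δ hδ q f f' g g'
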